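/- arXiv:1211.1299 — 3 statements merged into one kernel-verified Lean document; each statement's English description precedes it below -/
import Mathlib

section
/- If a hypergraph H has cutwidth at most k, then the treewidth of its incidence graph is at most max(k, 1). -/
/-- A tree decomposition of a (simple) graph. -/
structure TreeDecomp {V : Type} (G : SimpleGraph V) where
  ι : Type
  tree : SimpleGraph ι
  isTree : tree.IsTree
  bag : ι → Set V
  bag_vertex : ∀ v, ∃ i, v ∈ bag i
  bag_edge : ∀ u v, G.Adj u v → ∃ i, u ∈ bag i ∧ v ∈ bag i
  bag_connected : ∀ v i j (p : tree.Path i j), v ∈ bag i → v ∈ bag j →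
    ∀ x ∈ p.1.support, v ∈ bag x

/-- The treewidth of a simple graph: the infimum over tree decompositions of the
maximum bag size minus one. -/
noncomputable def treewidth {V : Type} (G : SimpleGraph V) : ℕ∞ :=
  ⨅ (D : TreeDecomp G), ⨆ i, (D.bag i).encard - 1

/-- A hypergraph: a type of vertices, a type (index set) of hyperedges, and an
incidence relation. Hyperedges may repeat and may be empty or singletons. -/
structure Hypergraph' where
  V : Type
  E : Type
  mem : V → E → Prop

/-- The incidence graph of a hypergraph: the bipartite graph on `V ⊕ E` with an
edge between `v` and `e` whenever `v ∈ e`. -/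
def Hypergraph'.incidenceGraph (H : Hypergraph') : SimpleGraph (H.V ⊕ H.E) :=
  SimpleGraph.fromRel (fun x y => ∃ v e, x = Sum.inl v ∧ y = Sum.inr e ∧ H.mem v e)

/-- The cut at position `i` of a linear layout `l`: the hyperedges having a
vertex strictly to the left of `i` and one strictly to the right. -/
def Hypergraph'.cutAt (H : Hypergraph') (l : H.V → ℝ) (i : ℝ) : Set H.E :=
  {e | ∃ v w, H.mem v e ∧ H.mem w e ∧ l v < i ∧ i < l w}

/-- `H` has cutwidth at most `k`: some injective linear layout has all cuts of
size at most `k`. -/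
def Hypergraph'.cutwidthAtMost (H : Hypergraph') (k : ℕ) : Prop :=
  ∃ l : H.V → ℝ, Function.Injective l ∧ ∀ i : ℝ, (H.cutAt l i).encard ≤ k

/-!
Number the vertices `0, …, n - 1` in layout order. On a spine, node `2s` gets vertex `s`
together with the hyperedges crossing the gap before it, and node `2s + 1` gets vertex `s`
with the hyperedges crossing the gap after it; every such bag has at most `k + 1` elements,
and the spine nodes containing a given vertex or hyperedge form an interval. The incidence of a
hyperedge `e` with its last vertex is not seen by the cut after that vertex (nor by any cut if `e`
is a singleton), so it is covered by a leaf `{e, last vertex of e}` attached at the spine node of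
that vertex. Leaves have size `2`, whence `max k 1`.
-/

open SimpleGraph Sum

namespace SimpleGraph

variable {V : Type*} {G : SimpleGraph V}

theorem Walk.apply_eq_of_forall_adj {β : Type*} (g : V → β) (b : Sym2 V)
    (hg : ∀ x y, G.Adj x y → s(x, y) ≠ b → g x = g y) {u v : V} (p : G.Walk u v)
    (hb : b ∉ p.edges) : g u = g v := by
  induction p with
  | nil => rfl
  | cons h p ih =>
    rw [Walk.edges_cons, List.mem_cons, not_or] at hb
    exact (hg _ _ h (Ne.symm hb.1)).trans (ih hb.2)

theorem isBridge_of_apply_ne {β : Type*} {u v : V} (g : V → β)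
    (hg : ∀ x y, G.Adj x y → s(x, y) ≠ s(u, v) → g x = g y) (hne : g u ≠ g v) :
    G.IsBridge s(u, v) :=
  isBridge_iff_forall_walk_mem_edges.mpr fun p =>
    by_contra fun hp => hne (p.apply_eq_of_forall_adj g _ hg hp)

theorem IsAcyclic.support_subset_support (hG : G.IsAcyclic) {u v : V} (p : G.Path u v)
    (w : G.Walk u v) : p.1.support ⊆ w.support := by
  classical
  rw [(hG.subsingleton_path u v).elim p w.toPath]
  exact w.support_toPath_subset_support

theorem Adj.exists_walk_support_subset {S : Set V} {u v : V} (h : G.Adj u v) (hu : u ∈ S)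
    (hv : v ∈ S) : ∃ w : G.Walk u v, ∀ z ∈ w.support, z ∈ S :=
  ⟨h.toWalk, by simp [hu, hv]⟩

theorem exists_walk_support_subset_of_hub {S : Set V} {c : V}
    (hS : ∀ x ∈ S, ∃ w : G.Walk x c, ∀ z ∈ w.support, z ∈ S) {x y : V}
    (hx : x ∈ S) (hy : y ∈ S) : ∃ w : G.Walk x y, ∀ z ∈ w.support, z ∈ S := by
  obtain ⟨w₁, h₁⟩ := hS x hx
  obtain ⟨w₂, h₂⟩ := hS y hy
  refine ⟨w₁.append w₂.reverse, fun z hz => ?_⟩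
  rw [Walk.mem_support_append_iff, Walk.support_reverse, List.mem_reverse] at hz
  exact hz.elim (h₁ z) (h₂ z)

end SimpleGraph

section Caterpillar

variable {E : Type*} (f : E → ℕ)

def CaterpillarRel : ℕ ⊕ E → ℕ ⊕ E → Prop := fun a b =>
  (∃ i, a = inl i ∧ b = inl (i + 1)) ∨ (∃ e, a = inl (f e) ∧ b = inr e)

def caterpillar : SimpleGraph (ℕ ⊕ E) := fromRel (CaterpillarRel f)

theorem caterpillar_adj_succ (i : ℕ) : (caterpillar f).Adj (inl i) (inl (i + 1)) :=
  (fromRel_adj _ _ _).mpr ⟨by simp, .inl (.inl ⟨i, rfl, rfl⟩)⟩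

theorem caterpillar_adj_leaf (e : E) : (caterpillar f).Adj (inl (f e)) (inr e) :=
  (fromRel_adj _ _ _).mpr ⟨by simp, .inl (.inr ⟨e, rfl, rfl⟩)⟩

theorem caterpillar_connected : (caterpillar f).Connected := by
  have spine (i : ℕ) : (caterpillar f).Reachable (inl i) (inl 0) := by
    induction i with
    | zero => rfl
    | succ i ih => exact (caterpillar_adj_succ f i).symm.reachable.trans ih
  have to_root : ∀ a, (caterpillar f).Reachable a (inl 0)
    | inl i => spine i
    | inr e => (caterpillar_adj_leaf f e).symm.reachable.trans (spine _)
  exact (connected_iff _).mpr ⟨fun a b => (to_root a).trans (to_root b).symm, ⟨inl 0⟩⟩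

/-- Removing a spine edge separates `≤ i` from `> i`; removing a leaf edge isolates the leaf. -/
theorem caterpillar_isBridge {a b : ℕ ⊕ E} (hab : CaterpillarRel f a b) :
    (caterpillar f).IsBridge s(a, b) := by
  rcases hab with ⟨i, rfl, rfl⟩ | ⟨e, rfl, rfl⟩
  · refine isBridge_of_apply_ne (Sum.elim (· ≤ i) (f · ≤ i)) ?_ (by simp)
    intro x y hxy hne
    rcases ((fromRel_adj _ _ _).mp hxy).2 with
      (⟨j, rfl, rfl⟩ | ⟨e, rfl, rfl⟩) | (⟨j, rfl, rfl⟩ | ⟨e, rfl, rfl⟩)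
    · have : j ≠ i := by rintro rfl; exact hne rfl
      simp only [elim_inl, eq_iff_iff]; omega
    · rfl
    · have : j ≠ i := by rintro rfl; exact hne Sym2.eq_swap
      simp only [elim_inl, eq_iff_iff]; omega
    · rfl
  · refine isBridge_of_apply_ne (· = inr e) ?_ (by simp)
    intro x y hxy hne
    rcases ((fromRel_adj _ _ _).mp hxy).2 with
      (⟨j, rfl, rfl⟩ | ⟨e', rfl, rfl⟩) | (⟨j, rfl, rfl⟩ | ⟨e', rfl, rfl⟩)
    · simp
    · have : e' ≠ e := by rintro rfl; exact hne rfl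
      simp [this]
    · simp
    · have : e' ≠ e := by rintro rfl; exact hne Sym2.eq_swap
      simp [this]

theorem caterpillar_isTree : (caterpillar f).IsTree := by
  refine ⟨caterpillar_connected f, isAcyclic_iff_forall_adj_isBridge.mpr fun a b hab => ?_⟩
  rcases ((fromRel_adj _ _ _).mp hab).2 with h | h
  · exact caterpillar_isBridge f h
  · exact Sym2.eq_swap ▸ caterpillar_isBridge f h

theorem exists_caterpillar_walk_spine {a b : ℕ} (hab : a ≤ b) :
    ∃ w : (caterpillar f).Walk (inl a) (inl b),
      ∀ z ∈ w.support, z ∈ inl '' Set.Icc a b := by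
  induction b, hab using Nat.le_induction with
  | base => exact ⟨Walk.nil, by simp⟩
  | succ b hab ih =>
    obtain ⟨w, hw⟩ := ih
    refine ⟨w.concat (caterpillar_adj_succ f b), fun z hz => ?_⟩
    rw [Walk.support_concat, List.mem_append, List.mem_singleton] at hz
    rcases hz with hz | rfl
    · obtain ⟨t, ht, rfl⟩ := hw z hz
      exact ⟨t, ⟨ht.1, ht.2.trans b.le_succ⟩, rfl⟩
    · exact ⟨b + 1, ⟨hab.trans b.le_succ, le_rfl⟩, rfl⟩

end Caterpillar

theorem treewidth_le_of_encard_bag_le {V : Type} {G : SimpleGraph V} (D : TreeDecomp G)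
    (k : ℕ) (hD : ∀ i, (D.bag i).encard ≤ k + 1) : treewidth G ≤ k :=
  (iInf_le _ D).trans (iSup_le fun i => tsub_le_iff_right.mpr (hD i))

theorem exists_nat_numbering_of_injective {V α : Type*} [Finite V] [LinearOrder α]
    {l : V → α} (hl : Function.Injective l) :
    ∃ idx : V → ℕ, Function.Injective idx ∧ ∀ v w, idx v < idx w → l v < l w := by
  have := Fintype.ofFinite V
  let := LinearOrder.lift' l hl
  let φ := monoEquivOfFin V rfl
  exact ⟨fun v => φ.symm v, fun v w h => φ.symm.injective (Fin.ext h),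
    fun v w h => φ.symm.lt_iff_lt.mp h⟩

namespace Hypergraph'

variable (H : Hypergraph') (idx : H.V → ℕ)

def cutBefore (s : ℕ) : Set H.E :=
  {e | ∃ v w, H.mem v e ∧ H.mem w e ∧ idx v < s ∧ s ≤ idx w}

noncomputable def lastIdx (e : H.E) : ℕ := sSup (idx '' {v | H.mem v e})

def lastVertices (e : H.E) : Set H.V := {v | H.mem v e ∧ ∀ w, H.mem w e → idx w ≤ idx v}

def caterpillarBag : ℕ ⊕ H.E → Set (H.V ⊕ H.E)
  | inl t => inl '' {v | idx v = t / 2} ∪ inr '' H.cutBefore idx ((t + 1) / 2)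
  | inr e => {inr e} ∪ inl '' H.lastVertices idx e

variable {H idx}

@[simp]
theorem inl_mem_caterpillarBag_inl {v : H.V} {t : ℕ} :
    inl v ∈ H.caterpillarBag idx (inl t) ↔ idx v = t / 2 := by
  simp [caterpillarBag]

@[simp]
theorem inr_mem_caterpillarBag_inl {e : H.E} {t : ℕ} :
    inr e ∈ H.caterpillarBag idx (inl t) ↔ e ∈ H.cutBefore idx ((t + 1) / 2) := by
  simp [caterpillarBag]

@[simp]
theorem inl_mem_caterpillarBag_inr {v : H.V} {e : H.E} :
    inl v ∈ H.caterpillarBag idx (inr e) ↔ v ∈ H.lastVertices idx e := by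
  simp [caterpillarBag]

@[simp]
theorem inr_mem_caterpillarBag_inr {e e' : H.E} :
    inr e ∈ H.caterpillarBag idx (inr e') ↔ e = e' := by
  simp [caterpillarBag]

theorem lastIdx_eq_of_mem_lastVertices {v : H.V} {e : H.E} (hv : v ∈ H.lastVertices idx e) :
    H.lastIdx idx e = idx v :=
  (show IsGreatest (idx '' {w | H.mem w e}) (idx v) from
    ⟨Set.mem_image_of_mem idx hv.1, by rintro _ ⟨w, hw, rfl⟩; exact hv.2 w hw⟩).csSup_eq

theorem le_lastIdx [Finite H.V] {v : H.V} {e : H.E} (hv : H.mem v e) :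
    idx v ≤ H.lastIdx idx e :=
  le_csSup (Set.toFinite _).bddAbove ⟨v, hv, rfl⟩

theorem exists_idx_eq_lastIdx [Finite H.V] {v : H.V} {e : H.E} (hv : H.mem v e) :
    ∃ u, H.mem u e ∧ idx u = H.lastIdx idx e :=
  Nat.sSup_mem (s := idx '' {u | H.mem u e}) ⟨_, Set.mem_image_of_mem idx hv⟩
    (Set.toFinite _).bddAbove

theorem encard_caterpillarBag_le (hidx : Function.Injective idx) {k : ℕ}
    (hcut : ∀ s, (H.cutBefore idx s).encard ≤ k) (i : ℕ ⊕ H.E) :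
    (H.caterpillarBag idx i).encard ≤ (max k 1 : ℕ) + 1 := by
  cases i with
  | inl t =>
    calc (H.caterpillarBag idx (inl t)).encard
        ≤ {v | idx v = t / 2}.encard + (H.cutBefore idx ((t + 1) / 2)).encard := by
          rw [← inl_injective.encard_image {v | idx v = t / 2},
            ← inr_injective.encard_image (H.cutBefore idx _)]
          exact Set.encard_union_le _ _
      _ ≤ 1 + k := add_le_add
          (Set.encard_le_one_iff.mpr fun a b ha hb => hidx (ha.trans hb.symm)) (hcut _)
      _ ≤ (max k 1 : ℕ) + 1 := by norm_cast; omega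
  | inr e =>
    calc (H.caterpillarBag idx (inr e)).encard
        ≤ ({inr e} : Set (H.V ⊕ H.E)).encard + (H.lastVertices idx e).encard := by
          rw [← inl_injective.encard_image (H.lastVertices idx e)]
          exact Set.encard_union_le _ _
      _ ≤ 1 + 1 := add_le_add (Set.encard_singleton _).le
          (Set.encard_le_one_iff.mpr fun a b ha hb =>
            hidx (le_antisymm (hb.2 a ha.1) (ha.2 b hb.1)))
      _ ≤ (max k 1 : ℕ) + 1 := by norm_cast; omega

theorem exists_caterpillarBag_of_mem {v : H.V} {e : H.E} (h : H.mem v e) :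
    ∃ i, inl v ∈ H.caterpillarBag idx i ∧ inr e ∈ H.caterpillarBag idx i := by
  by_cases hlast : v ∈ H.lastVertices idx e
  · exact ⟨inr e, by simpa using hlast, by simp⟩
  · obtain ⟨w, hw, hvw⟩ : ∃ w, H.mem w e ∧ idx v < idx w := by
      simpa [lastVertices, h] using hlast
    refine ⟨inl (2 * idx v + 1), inl_mem_caterpillarBag_inl.mpr (by omega), ?_⟩
    simp only [inr_mem_caterpillarBag_inl]
    exact ⟨v, w, h, hw, by omega, by omega⟩

theorem exists_walk_to_vertex_hub (v : H.V) {i : ℕ ⊕ H.E}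
    (hi : inl v ∈ H.caterpillarBag idx i) :
    ∃ w : (caterpillar (2 * H.lastIdx idx ·)).Walk i (inl (2 * idx v)),
      ∀ z ∈ w.support, inl v ∈ H.caterpillarBag idx z := by
  cases i with
  | inl t =>
    obtain rfl | rfl : t = 2 * idx v ∨ t = 2 * idx v + 1 := by
      have := inl_mem_caterpillarBag_inl.mp hi; omega
    · exact ⟨.nil, by simp⟩
    · exact (caterpillar_adj_succ _ _).symm.exists_walk_support_subset
        (S := {z | inl v ∈ H.caterpillarBag idx z}) hi (inl_mem_caterpillarBag_inl.mpr (by omega))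
  | inr e =>
    have hlast := lastIdx_eq_of_mem_lastVertices (inl_mem_caterpillarBag_inr.mp hi)
    rw [← hlast]
    exact (caterpillar_adj_leaf _ e).symm.exists_walk_support_subset
      (S := {z | inl v ∈ H.caterpillarBag idx z}) hi (inl_mem_caterpillarBag_inl.mpr (by omega))

theorem exists_walk_to_edge_hub [Finite H.V] (e : H.E) {i : ℕ ⊕ H.E}
    (hi : inr e ∈ H.caterpillarBag idx i) :
    ∃ w : (caterpillar (2 * H.lastIdx idx ·)).Walk i (inr e),
      ∀ z ∈ w.support, inr e ∈ H.caterpillarBag idx z := by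
  cases i with
  | inr e' =>
    obtain rfl := inr_mem_caterpillarBag_inr.mp hi
    exact ⟨.nil, by simp⟩
  | inl t =>
    obtain ⟨v, w, hv, hw, hvt, htw⟩ := inr_mem_caterpillarBag_inl.mp hi
    obtain ⟨u, hu, hlast⟩ := exists_idx_eq_lastIdx (idx := idx) hw
    have hwu : idx w ≤ idx u := hlast ▸ le_lastIdx hw
    obtain ⟨spine, hspine⟩ := exists_caterpillar_walk_spine (2 * H.lastIdx idx ·)
      (show t ≤ 2 * H.lastIdx idx e by omega)
    refine ⟨spine.concat (caterpillar_adj_leaf _ e), fun z hz => ?_⟩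
    rw [Walk.support_concat, List.mem_append, List.mem_singleton] at hz
    rcases hz with hz | rfl
    · obtain ⟨t', ⟨htt', ht'⟩, rfl⟩ := hspine z hz
      exact inr_mem_caterpillarBag_inl.mpr ⟨v, u, hv, hu, by omega, by omega⟩
    · simp

theorem exists_walk_caterpillarBag [Finite H.V] (x : H.V ⊕ H.E) {i j : ℕ ⊕ H.E}
    (hi : x ∈ H.caterpillarBag idx i) (hj : x ∈ H.caterpillarBag idx j) :
    ∃ w : (caterpillar (2 * H.lastIdx idx ·)).Walk i j,
      ∀ z ∈ w.support, x ∈ H.caterpillarBag idx z := by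
  cases x with
  | inl v => exact exists_walk_support_subset_of_hub (fun _ => exists_walk_to_vertex_hub v) hi hj
  | inr e => exact exists_walk_support_subset_of_hub (fun _ => exists_walk_to_edge_hub e) hi hj

variable (H idx) in
noncomputable def caterpillarDecomp [Finite H.V] : TreeDecomp H.incidenceGraph where
  ι := ℕ ⊕ H.E
  tree := caterpillar (2 * H.lastIdx idx ·)
  isTree := caterpillar_isTree _
  bag := H.caterpillarBag idx
  bag_vertex
    | inl v => ⟨inl (2 * idx v), by simp⟩
    | inr e => ⟨inr e, by simp⟩
  bag_edge x y hxy := by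
    rcases ((fromRel_adj _ _ _).mp hxy).2 with ⟨v, e, rfl, rfl, h⟩ | ⟨v, e, rfl, rfl, h⟩
    · exact exists_caterpillarBag_of_mem h
    · exact (exists_caterpillarBag_of_mem h).imp fun _ => And.symm
  bag_connected x i j p hi hj z hz := by
    obtain ⟨w, hw⟩ := exists_walk_caterpillarBag x hi hj
    exact hw z ((caterpillar_isTree _).isAcyclic.support_subset_support p w hz)

theorem treewidth_incidenceGraph_le [Finite H.V] (hidx : Function.Injective idx) {k : ℕ}
    (hcut : ∀ s, (H.cutBefore idx s).encard ≤ k) :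
    treewidth H.incidenceGraph ≤ (max k 1 : ℕ) :=
  treewidth_le_of_encard_bag_le (H.caterpillarDecomp idx) _ (encard_caterpillarBag_le hidx hcut)

/-- Cuts of the numbering are cuts of the layout, taken halfway between the last vertex
before the gap and the first one after it. -/
theorem exists_cutBefore_subset_cutAt [Finite H.V] {l : H.V → ℝ}
    (hl : ∀ v w, idx v < idx w → l v < l w) (s : ℕ) :
    ∃ ρ, H.cutBefore idx s ⊆ H.cutAt l ρ := by
  set L := l '' {v | idx v < s}
  set R := l '' {w | s ≤ idx w}
  refine ⟨(sSup L + sInf R) / 2, ?_⟩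
  rintro e ⟨v, w, hv, hw, hvs, hws⟩
  obtain ⟨a, ha, hal⟩ : sSup L ∈ L :=
    Set.Nonempty.csSup_mem ⟨_, v, hvs, rfl⟩ (Set.toFinite L)
  obtain ⟨b, hb, hbr⟩ : sInf R ∈ R :=
    Set.Nonempty.csInf_mem ⟨_, w, hws, rfl⟩ (Set.toFinite R)
  have hab : l a < l b := hl a b (lt_of_lt_of_le ha hb)
  have hvL : l v ≤ sSup L := le_csSup (Set.toFinite L).bddAbove ⟨v, hvs, rfl⟩
  have hwR : sInf R ≤ l w := csInf_le (Set.toFinite R).bddBelow ⟨w, hws, rfl⟩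
  exact ⟨v, w, hv, hw, by linarith, by linarith⟩

end Hypergraph'

theorem cutwidth_le_incidence_treewidth_general (H : Hypergraph') [Fintype H.V]
    (k : ℕ) (hcw : H.cutwidthAtMost k) :
    treewidth H.incidenceGraph ≤ (max k 1 : ℕ) := by
  obtain ⟨l, hl, hcut⟩ := hcw
  obtain ⟨idx, hidx, hmono⟩ := exists_nat_numbering_of_injective hl
  refine H.treewidth_incidenceGraph_le hidx fun s => ?_
  obtain ⟨ρ, hρ⟩ := H.exists_cutBefore_subset_cutAt hmono s
  exact (Set.encard_mono hρ).trans (hcut ρ)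

/-- if a (finite) hypergraph has cutwidth at most `k`, then the
treewidth of its incidence graph is at most `max k 1`. -/
theorem cutwidth_le_incidence_treewidth (H : Hypergraph') [Fintype H.V] [Fintype H.E]
    (k : ℕ) (hcw : H.cutwidthAtMost k) :
    treewidth H.incidenceGraph ≤ (max k 1 : ℕ) :=
  cutwidth_le_incidence_treewidth_general H k hcw
end

section
/- Any finite sequence of natural numbers bounded by k to which none of the following three reduction rules applies has length at most 2k + 2: (R1) delete the middle of any three consecutive entries that are monotonically nondecreasing or nonincreasing; (R2) replace any maximal block of consecutive entries all at least max(a,b), where a and b are the entries immediately before and after the block, by a single entry equal to the block's maximum; (R3) symmetrically for blocks of entries all at most min(a,b), replaced by the block's minimum. -/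
/-!
Irreducibility under (R1) says the sequence zigzags strictly, so every interior entry is a
valley or a peak. A valley at least as high as both entries two steps away would, together
with its two flanking peaks, form a block reducible by (R2). Consequently, among two entries
`x < y` and the valleys strictly between them, the maximum is attained only at `x` or `y`, so
an interior valley lies strictly below `max (w x) (w y)`. Peaks are the valleys of the order
dual, where (R3) plays the role of (R2). Hence no value occurs three times, and a sequence with
values in `{0, …, k}` has at most `2 (k + 1)` entries.
-/

/-- Rule (R1) applies to the sequence `w` of length `m`: some three consecutive
entries are monotonically nondecreasing or nonincreasing (so the middle one
could be deleted). -/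
def R1Applies (m : ℕ) (w : ℕ → ℕ) : Prop :=
  ∃ i, i + 2 < m ∧
    ((w i ≤ w (i + 1) ∧ w (i + 1) ≤ w (i + 2)) ∨
     (w (i + 2) ≤ w (i + 1) ∧ w (i + 1) ≤ w i))

/-- Rule (R2) applies: there is a block `w i, …, w j` of length at least two,
with entries `a = w (i-1)` and `b = w (j+1)` immediately before and after it,
all of whose entries are at least `max a b` (so it could be replaced by a
single entry, its maximum). -/
def R2Applies (m : ℕ) (w : ℕ → ℕ) : Prop :=
  ∃ i j, 0 < i ∧ i < j ∧ j + 1 < m ∧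
    ∀ l, i ≤ l → l ≤ j → max (w (i - 1)) (w (j + 1)) ≤ w l

/-- Rule (R3) applies: symmetrically, a block of length at least two all of
whose entries are at most `min a b` (replaceable by its minimum). -/
def R3Applies (m : ℕ) (w : ℕ → ℕ) : Prop :=
  ∃ i j, 0 < i ∧ i < j ∧ j + 1 < m ∧
    ∀ l, i ≤ l → l ≤ j → w l ≤ min (w (i - 1)) (w (j + 1))

open Finset OrderDual

section Zigzag

variable {α : Type*} [LinearOrder α] {m : ℕ} {f : ℕ → α}

def IsZigzag (m : ℕ) (f : ℕ → α) : Prop :=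
  ∀ i, i + 2 < m →
    (f i < f (i + 1) ∧ f (i + 2) < f (i + 1)) ∨ (f (i + 1) < f i ∧ f (i + 1) < f (i + 2))

/-- At `i = 0` the truncated `i - 1` makes this false. -/
def IsValley (f : ℕ → α) (i : ℕ) : Prop :=
  f i < f (i - 1) ∧ f i < f (i + 1)

/-- What (R2) says about a valley `a + 2` and its two flanking peaks `a + 1`, `a + 3`. -/
def ValleysLtMaxTwoAway (m : ℕ) (f : ℕ → α) : Prop :=
  ∀ a, a + 4 < m → IsValley f (a + 2) → f (a + 2) < max (f a) (f (a + 4))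

theorem IsZigzag.dual (hf : IsZigzag m f) : IsZigzag m (toDual ∘ f : ℕ → αᵒᵈ) :=
  fun i hi => (hf i hi).symm

theorem IsZigzag.isValley_or_isValley_dual (hf : IsZigzag m f) {i : ℕ} (hi : 0 < i)
    (him : i + 1 < m) : IsValley f i ∨ IsValley (toDual ∘ f : ℕ → αᵒᵈ) i := by
  obtain ⟨j, rfl⟩ : ∃ j, i = j + 1 := ⟨i - 1, by omega⟩
  exact (hf j (by omega)).symm

theorem IsZigzag.isValley_add_two_iff (hf : IsZigzag m f) {a : ℕ} (ha : 0 < a)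
    (ham : a + 3 < m) : IsValley f (a + 2) ↔ IsValley f a := by
  obtain ⟨b, rfl⟩ : ∃ b, a = b + 1 := ⟨a - 1, by omega⟩
  have h₀ := hf b (by omega)
  have h₁ := hf (b + 1) (by omega)
  have h₂ := hf (b + 2) (by omega)
  simp only [IsValley, add_assoc, Nat.reduceAdd, Nat.add_sub_cancel, Nat.reduceSubDiff]
    at h₀ h₁ h₂ ⊢
  rcases h₀ with h₀ | h₀ <;> rcases h₁ with h₁ | h₁ <;> rcases h₂ with h₂ | h₂ <;>
    constructor <;> intro h <;> constructor <;> order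

theorem IsZigzag.exists_lt_of_isValley (hf : IsZigzag m f) (hv : ValleysLtMaxTwoAway m f)
    {x y i : ℕ} (hxi : x < i) (hiy : i < y) (hym : y < m) (hi : IsValley f i) :
    ∃ j, (j = x ∨ j = y ∨ x < j ∧ j < y ∧ IsValley f j) ∧ f i < f j := by
  by_cases hx : i = x + 1
  · exact ⟨x, Or.inl rfl, by simpa [hx] using hi.1⟩
  by_cases hy : y = i + 1
  · exact ⟨y, Or.inr (Or.inl rfl), hy ▸ hi.2⟩
  obtain ⟨a, rfl⟩ : ∃ a, i = a + 2 := ⟨i - 2, by omega⟩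
  rcases lt_max_iff.mp (hv a (by omega) hi) with ha | ha
  · refine ⟨a, ?_, ha⟩
    rcases eq_or_lt_of_le (show x ≤ a by omega) with rfl | hxa
    · exact Or.inl rfl
    · exact Or.inr (Or.inr
        ⟨hxa, by omega, (hf.isValley_add_two_iff (by omega) (by omega)).mp hi⟩)
  · refine ⟨a + 4, ?_, ha⟩
    rcases eq_or_lt_of_le (show a + 4 ≤ y by omega) with hay | hay
    · exact Or.inr (Or.inl hay)
    · exact Or.inr (Or.inr
        ⟨by omega, hay, (hf.isValley_add_two_iff (by omega) (by omega)).mpr hi⟩)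

theorem IsZigzag.lt_max_of_isValley (hf : IsZigzag m f) (hv : ValleysLtMaxTwoAway m f)
    {x y q : ℕ} (hxq : x < q) (hqy : q < y) (hym : y < m) (hq : IsValley f q) :
    f q < max (f x) (f y) := by
  classical
  set S := (Icc x y).filter (fun j => j = x ∨ j = y ∨ x < j ∧ j < y ∧ IsValley f j)
  have mem_S {j : ℕ} (hj : j = x ∨ j = y ∨ x < j ∧ j < y ∧ IsValley f j) : j ∈ S := by
    simp only [S, mem_filter, mem_Icc]
    exact ⟨by omega, hj⟩
  obtain ⟨j₀, hj₀, hmax⟩ := S.exists_max_image f ⟨x, mem_S (Or.inl rfl)⟩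
  have below_max {i : ℕ} (hxi : x < i) (hiy : i < y) (hi : IsValley f i) : f i < f j₀ := by
    obtain ⟨j, hj, hij⟩ := hf.exists_lt_of_isValley hv hxi hiy hym hi
    exact hij.trans_le (hmax j (mem_S hj))
  have hj₀_end : j₀ = x ∨ j₀ = y := by
    rcases (mem_filter.mp hj₀).2 with h | h | ⟨hxj, hjy, hj⟩
    · exact Or.inl h
    · exact Or.inr h
    · exact absurd (below_max hxj hjy hj) (lt_irrefl _)
  calc f q < f j₀ := below_max hxq hqy hq
    _ ≤ max (f x) (f y) := by rcases hj₀_end with rfl | rfl <;> simp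

end Zigzag

section Irreducible

variable {m : ℕ} {w : ℕ → ℕ}

theorem isZigzag_of_not_r1Applies (h1 : ¬ R1Applies m w) : IsZigzag m w := by
  intro i hi
  by_contra h
  exact h1 ⟨i, hi, by omega⟩

theorem valleysLtMaxTwoAway_of_not_r2Applies (h2 : ¬ R2Applies m w) :
    ValleysLtMaxTwoAway m w := by
  intro a ha ⟨hleft, hright⟩
  by_contra hle
  refine h2 ⟨a + 1, a + 3, by omega, by omega, by omega, fun l hl hl' => ?_⟩
  simp only [add_assoc, Nat.reduceAdd, Nat.add_sub_cancel, Nat.reduceSubDiff, not_lt,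
    max_le_iff] at hleft hright hle ⊢
  obtain rfl | rfl | rfl : l = a + 1 ∨ l = a + 2 ∨ l = a + 3 := by omega
  all_goals omega

theorem valleysLtMaxTwoAway_dual_of_not_r3Applies (h3 : ¬ R3Applies m w) :
    ValleysLtMaxTwoAway m (toDual ∘ w : ℕ → ℕᵒᵈ) := by
  intro a ha ⟨hleft, hright⟩
  by_contra hle
  refine h3 ⟨a + 1, a + 3, by omega, by omega, by omega, fun l hl hl' => ?_⟩
  simp only [Function.comp_apply, add_assoc, Nat.reduceAdd, Nat.add_sub_cancel,
    Nat.reduceSubDiff, not_lt, max_le_iff, le_min_iff, toDual_le_toDual,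
    toDual_lt_toDual] at hleft hright hle ⊢
  obtain rfl | rfl | rfl : l = a + 1 ∨ l = a + 2 ∨ l = a + 3 := by omega
  all_goals omega

theorem not_three_eq_of_irreducible (h1 : ¬ R1Applies m w) (h2 : ¬ R2Applies m w)
    (h3 : ¬ R3Applies m w) {p q r : ℕ} (hpq : p < q) (hqr : q < r) (hrm : r < m)
    (hp : w p = w q) (hr : w r = w q) : False := by
  have hw := isZigzag_of_not_r1Applies h1
  rcases hw.isValley_or_isValley_dual (by omega : 0 < q) (by omega) with hq | hq
  · have := hw.lt_max_of_isValley (valleysLtMaxTwoAway_of_not_r2Applies h2) hpq hqr hrm hq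
    rw [hp, hr, max_self] at this
    exact lt_irrefl _ this
  · have := hw.dual.lt_max_of_isValley (valleysLtMaxTwoAway_dual_of_not_r3Applies h3)
      hpq hqr hrm hq
    simp only [Function.comp_apply, hp, hr, max_self] at this
    exact lt_irrefl _ this

theorem card_fiber_le_two_of_irreducible (h1 : ¬ R1Applies m w) (h2 : ¬ R2Applies m w)
    (h3 : ¬ R3Applies m w) (b : ℕ) : #{i ∈ range m | w i = b} ≤ 2 := by
  by_contra! hcard
  set s := {i ∈ range m | w i = b}
  let e := s.orderEmbOfFin rfl
  have he (n : Fin #s) : e n < m ∧ w (e n) = b := by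
    have hn := mem_filter.mp (s.orderEmbOfFin_mem rfl n)
    exact ⟨mem_range.mp hn.1, hn.2⟩
  exact not_three_eq_of_irreducible h1 h2 h3 (p := e ⟨0, by omega⟩) (q := e ⟨1, by omega⟩)
    (r := e ⟨2, by omega⟩) (by simp) (by simp) (he _).1 ((he _).2.trans (he _).2.symm)
    ((he _).2.trans (he _).2.symm)

end Irreducible

/-- any sequence `w 0, …, w (m-1)` of naturals bounded by `k` to
which none of the reduction rules (R1), (R2), (R3) applies has length at most
`2k + 2`. -/
theorem irreducible_sequence_short (k m : ℕ) (w : ℕ → ℕ)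
    (hbound : ∀ i < m, w i ≤ k)
    (h1 : ¬ R1Applies m w) (h2 : ¬ R2Applies m w) (h3 : ¬ R3Applies m w) :
    m ≤ 2 * k + 2 := by
  have hmaps : ∀ i ∈ range m, w i ∈ range (k + 1) := fun i hi =>
    mem_range.mpr (Nat.lt_succ_of_le (hbound i (mem_range.mp hi)))
  have := card_le_mul_card_image_of_maps_to hmaps 2
    (fun b _ => card_fiber_le_two_of_irreducible h1 h2 h3 b)
  simpa [mul_add] using this
end

section
/- Adding a universal hyperedge (containing all vertices) to any hypergraph yields a hypergraph of hypertree width one; hence there is a family of hypergraphs of hypertree width one with unbounded incidence treewidth. -/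
open scoped ENNReal

/-- The primal (Gaifman) graph of a hypergraph: two distinct vertices are
adjacent iff they lie together in some hyperedge. -/
def Hypergraph'.primal (H : Hypergraph') : SimpleGraph H.V :=
  SimpleGraph.fromRel (fun u v => ∃ e, H.mem u e ∧ H.mem v e)

/-- A set `F` of hyperedges covers a bag `b` if every vertex of `b` lies in
some hyperedge of `F`. -/
def Hypergraph'.Covers (H : Hypergraph') (b : Set H.V) (F : Set H.E) : Prop :=
  ∀ v ∈ b, ∃ e ∈ F, H.mem v e

/-- The generalized hypertree width of a hypergraph: the minimum, over all tree
decompositions of the primal graph, of the maximum over the bags of the minimum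
number of hyperedges covering the bag. -/
noncomputable def ghtw (H : Hypergraph') : ℕ∞ :=
  ⨅ (D : TreeDecomp H.primal), ⨆ i,
    ⨅ F ∈ {F : Set H.E | H.Covers (D.bag i) F}, F.encard

/-- `j` lies in the subtree rooted at `i` of the tree `tr` rooted at `r`:
`i` lies on every path from the root `r` to `j`. -/
def InSubtree {ι : Type} (tr : SimpleGraph ι) (r i j : ι) : Prop :=
  ∀ p : tr.Path r j, i ∈ p.1.support

/-- A hyperedge `e` may be used in the cover of the bag at node `i` of the
rooted decomposition: every vertex of `e` occurring in a bag of the subtree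
rooted at `i` is contained in the bag at `i`. -/
def AllowedEdge (H : Hypergraph') (D : TreeDecomp H.primal) (r i : D.ι) (e : H.E) : Prop :=
  ∀ v, H.mem v e → (∃ j, InSubtree D.tree r i j ∧ v ∈ D.bag j) → v ∈ D.bag i

/-- The hypertree width of a hypergraph: as generalized hypertree width, but
for rooted decompositions with the descendant condition on cover hyperedges. -/
noncomputable def htw (H : Hypergraph') : ℕ∞ :=
  ⨅ (D : TreeDecomp H.primal), ⨅ (r : D.ι), ⨆ i,
    ⨅ F ∈ {F : Set H.E |
      H.Covers (D.bag i) F ∧ ∀ e ∈ F, AllowedEdge H D r i e}, F.encard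

/-- The fractional hypertree width of a hypergraph: bags are covered
fractionally by nonnegative weights on the hyperedges, each bag vertex being
covered with total weight at least `1`; the width is the total weight. -/
noncomputable def fhtw (H : Hypergraph') : ℝ≥0∞ :=
  ⨅ (D : TreeDecomp H.primal), ⨆ i,
    ⨅ γ ∈ {γ : H.E → ℝ≥0∞ |
      ∀ v ∈ D.bag i, 1 ≤ ∑' e : {e : H.E // H.mem v e}, γ e.1}, ∑' e, γ e

/-- Add a universal hyperedge (containing all vertices) to a hypergraph. -/
def addUniversal (H : Hypergraph') : Hypergraph' where
  V := H.V
  E := Option H.E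
  mem := fun v e => e.elim True (H.mem v)

/-! The hyperedge `none` of `addUniversal H` covers the single bag `univ` of the trivial tree
decomposition. For unbounded incidence treewidth, add a universal hyperedge to a hypergraph
with `m` vertices and `m` hyperedges, all incident: its incidence graph contains the biclique
`K_{m,m}`. In any tree decomposition the node sets `T a ∪ T b` (where `T x` is the subtree of
nodes whose bag contains `x`) along a perfect matching `a_i b_i` of `K_{m,m}` pairwise meet,
so by the Helly property of subtrees some bag meets every `{a_i, b_i}` and has at least `m`
vertices. -/

namespace SimpleGraph

variable {V : Type*} {G : SimpleGraph V}

/-- In a tree, these are the vertex sets of subtrees. -/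
def PathConvex (G : SimpleGraph V) (S : Set V) : Prop :=
  ∀ ⦃u⦄, u ∈ S → ∀ ⦃v⦄, v ∈ S → ∀ p : G.Path u v, ∀ x ∈ p.1.support, x ∈ S

lemma PathConvex.inter {S T : Set V} (hS : G.PathConvex S) (hT : G.PathConvex T) :
    G.PathConvex (S ∩ T) :=
  fun _ hu _ hv p x hx => ⟨hS hu.1 hv.1 p x hx, hT hu.2 hv.2 p x hx⟩

lemma PathConvex.union (hG : G.IsTree) {S T : Set V} (hS : G.PathConvex S)
    (hT : G.PathConvex T) (hST : (S ∩ T).Nonempty) : G.PathConvex (S ∪ T) := by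
  classical
  obtain ⟨z, hzS, hzT⟩ := hST
  suffices key : ∀ {S T : Set V}, G.PathConvex S → G.PathConvex T → z ∈ S → z ∈ T →
      ∀ ⦃u⦄, u ∈ S → ∀ ⦃v⦄, v ∈ T → ∀ p : G.Path u v, ∀ x ∈ p.1.support, x ∈ S ∪ T by
    rintro u (hu | hu) v (hv | hv) p x hx
    · exact Or.inl (hS hu hv p x hx)
    · exact key hS hT hzS hzT hu hv p x hx
    · exact (key hT hS hzT hzS hu hv p x hx).symm
    · exact Or.inr (hT hu hv p x hx)
  intro S T hS hT hzS hzT u hu v hv p x hx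
  let q₁ : G.Path u z := (hG.connected u z).some.toPath
  let q₂ : G.Path z v := (hG.connected z v).some.toPath
  -- paths in a tree are unique, so `p` is the shortcut of the walk `u → z → v`
  have hp : p = ⟨(q₁.1.append q₂.1).bypass, Walk.bypass_isPath _⟩ :=
    (hG.isAcyclic.subsingleton_path u v).elim _ _
  subst hp
  rcases (Walk.mem_support_append_iff _ _).1 (Walk.support_bypass_subset_support _ hx) with h | h
  · exact Or.inl (hS hu hzS q₁ x h)
  · exact Or.inr (hT hzT hv q₂ x h)

lemma Walk.IsPath.append {u v w : V} {p : G.Walk u v} {q : G.Walk v w} (hp : p.IsPath)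
    (hq : q.IsPath) (hpq : ∀ x ∈ p.support, x ∈ q.support → x = v) : (p.append q).IsPath := by
  rw [Walk.isPath_def, Walk.support_append]
  have hq' := (Walk.isPath_def _).1 hq
  rw [← q.cons_tail_support] at hq'
  obtain ⟨hv, htail⟩ := List.nodup_cons.1 hq'
  refine ((Walk.isPath_def _).1 hp).append htail fun x hxp hxq => ?_
  obtain rfl := hpq x hxp (q.cons_tail_support ▸ List.mem_cons_of_mem _ hxq)
  exact hv hxq

lemma Walk.exists_eq_append_of_mem {u w : V} (p : G.Walk u w) (S : Set V) (hw : w ∈ S) :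
    ∃ m ∈ S, ∃ (p₁ : G.Walk u m) (p₂ : G.Walk m w),
      p = p₁.append p₂ ∧ ∀ x ∈ p₁.support, x ∈ S → x = m := by
  classical
  induction p with
  | nil => exact ⟨_, hw, Walk.nil, Walk.nil, rfl, by simp⟩
  | @cons u _ _ h p ih =>
    by_cases hu : u ∈ S
    · exact ⟨u, hu, Walk.nil, Walk.cons h p, rfl, by simp⟩
    · obtain ⟨m, hm, p₁, p₂, rfl, hfirst⟩ := ih hw
      refine ⟨m, hm, Walk.cons h p₁, p₂, (Walk.cons_append _ _ _).symm, ?_⟩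
      rintro x hx hxS
      rcases List.mem_cons.1 (Walk.support_cons _ _ ▸ hx) with rfl | hx
      · exact absurd hxS hu
      · exact hfirst x hx hxS

lemma Walk.IsPath.exists_path_through_common {a b c : V} {p : G.Walk c a} {q : G.Walk b a}
    (hp : p.IsPath) (hq : q.IsPath) :
    ∃ m ∈ p.support, m ∈ q.support ∧ ∃ r : G.Path c b, m ∈ r.1.support := by
  classical
  obtain ⟨m, hm, p₁, p₂, rfl, hfirst⟩ := p.exists_eq_append_of_mem {x | x ∈ q.support}
    q.end_mem_support
  have hr : (p₁.append (q.takeUntil m hm).reverse).IsPath := by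
    refine (hp.of_append_left).append (hq.takeUntil hm).reverse fun x hx₁ hx₂ => ?_
    rw [Walk.support_reverse, List.mem_reverse] at hx₂
    exact hfirst x hx₁ (q.support_takeUntil_subset_support hm hx₂)
  exact ⟨m, Walk.support_subset_support_append_left _ _ p₁.end_mem_support, hm, ⟨_, hr⟩,
    Walk.support_subset_support_append_left _ _ p₁.end_mem_support⟩

lemma PathConvex.exists_mem_inter_inter (hG : G.Connected) {S₁ S₂ S₃ : Set V}
    (h₁ : G.PathConvex S₁) (h₂ : G.PathConvex S₂) (h₃ : G.PathConvex S₃) {a b c : V}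
    (ha : a ∈ S₁ ∩ S₂) (hb : b ∈ S₁ ∩ S₃) (hc : c ∈ S₂ ∩ S₃) : (S₁ ∩ S₂ ∩ S₃).Nonempty := by
  classical
  let p : G.Path a b := (hG a b).some.toPath
  let q : G.Path c b := (hG c b).some.toPath
  obtain ⟨m, hmp, hmq, r, hmr⟩ := p.2.exists_path_through_common q.2
  exact ⟨m, ⟨h₁ ha.1 hb.1 p m hmp, h₂ ha.2 hc.1 r m hmr⟩, h₃ hc.2 hb.2 q m hmq⟩

lemma PathConvex.helly (hG : G.Connected) {α : Type*} (s : Finset α)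
    (T : α → Set V) (hT : ∀ a ∈ s, G.PathConvex (T a))
    (hpair : ∀ a ∈ s, ∀ b ∈ s, (T a ∩ T b).Nonempty) : ∃ x, ∀ a ∈ s, x ∈ T a := by
  classical
  induction s using Finset.induction_on generalizing T with
  | empty => exact ⟨hG.nonempty.some, by simp⟩
  | @insert a s ha ih =>
    rcases s.eq_empty_or_nonempty with rfl | hs
    · obtain ⟨x, hx, -⟩ := hpair a (by simp) a (by simp)
      exact ⟨x, by simpa using hx⟩
    obtain ⟨x, hx⟩ := ih (fun b => T b ∩ T a)
      (fun b hb => (hT b (by simp [hb])).inter (hT a (by simp)))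
      fun b hb c hc => by
        obtain ⟨_, hab⟩ := hpair b (by simp [hb]) a (by simp)
        obtain ⟨_, hac⟩ := hpair c (by simp [hc]) a (by simp)
        obtain ⟨_, hbc⟩ := hpair b (by simp [hb]) c (by simp [hc])
        obtain ⟨m, ⟨hmb, hmc⟩, hma⟩ := exists_mem_inter_inter hG (hT b (by simp [hb]))
          (hT c (by simp [hc])) (hT a (by simp)) hbc hab hac
        exact ⟨m, ⟨hmb, hma⟩, hmc, hma⟩
    refine ⟨x, fun b hb => ?_⟩
    rcases Finset.mem_insert.1 hb with rfl | hb
    · exact (hx _ hs.choose_spec).2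
    · exact (hx b hb).1

end SimpleGraph

open SimpleGraph

namespace TreeDecomp

variable {V : Type} {G : SimpleGraph V}

lemma pathConvex_setOf_mem_bag (D : TreeDecomp G) (v : V) :
    D.tree.PathConvex {i | v ∈ D.bag i} :=
  fun i hi j hj p => D.bag_connected v i j p hi hj

lemma exists_le_encard_bag_of_biclique (D : TreeDecomp G) {ι : Type*} [Fintype ι]
    {A B : ι → V} (hA : A.Injective) (hB : B.Injective) (hAB : ∀ i j, G.Adj (A i) (B j)) :
    ∃ t, ENat.card ι ≤ (D.bag t).encard := by
  classical
  let X : ι → Set D.ι := fun i => {t | A i ∈ D.bag t} ∪ {t | B i ∈ D.bag t}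
  have hmeet : ∀ i j, ({t | A i ∈ D.bag t} ∩ {t | B j ∈ D.bag t}).Nonempty := fun i j =>
    let ⟨t, ht⟩ := D.bag_edge _ _ (hAB i j)
    ⟨t, ht⟩
  obtain ⟨t, ht⟩ := PathConvex.helly D.isTree.connected Finset.univ X
    (fun i _ => (D.pathConvex_setOf_mem_bag _).union D.isTree
      (D.pathConvex_setOf_mem_bag _) (hmeet i i))
    fun i _ j _ => (hmeet i j).mono fun t h => ⟨Or.inl h.1, Or.inr h.2⟩
  let f : ι → D.bag t := fun i =>
    if h : A i ∈ D.bag t then ⟨A i, h⟩ else ⟨B i, (ht i (Finset.mem_univ i)).resolve_left h⟩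
  have hf : f.Injective := by
    intro i j hij
    have hne : ∀ i j, A i ≠ B j := fun i j => (hAB i j).ne
    simp only [f] at hij
    split_ifs at hij <;> simp only [Subtype.mk.injEq] at hij
    exacts [hA hij, absurd hij (hne i j), absurd hij.symm (hne j i), hB hij]
  exact ⟨t, ENat.card_le_card_of_injective hf⟩

def single (G : SimpleGraph V) : TreeDecomp G where
  ι := Unit
  tree := ⊥
  isTree := .of_subsingleton
  bag _ := Set.univ
  bag_vertex _ := ⟨(), trivial⟩
  bag_edge _ _ _ := ⟨(), trivial, trivial⟩
  bag_connected _ _ _ _ _ _ _ _ := trivial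

end TreeDecomp

lemma le_treewidth_of_biclique {V : Type} {G : SimpleGraph V} {ι : Type*} [Fintype ι]
    {A B : ι → V} (hA : A.Injective) (hB : B.Injective) (hAB : ∀ i j, G.Adj (A i) (B j)) :
    ENat.card ι - 1 ≤ treewidth G :=
  le_iInf fun D =>
    let ⟨t, ht⟩ := D.exists_le_encard_bag_of_biclique hA hB hAB
    le_iSup_of_le t (tsub_le_tsub_right ht 1)

lemma htw_le_one_of_forall_mem (H : Hypergraph') (e : H.E) (he : ∀ v, H.mem v e) :
    htw H ≤ 1 := by
  refine iInf_le_of_le (TreeDecomp.single _) <| iInf_le_of_le () <| iSup_le fun i => ?_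
  refine iInf₂_le_of_le {e} ⟨fun v _ => ⟨e, rfl, he v⟩, fun _ _ v _ _ => trivial⟩ ?_
  exact (Set.encard_singleton e).le

lemma htw_addUniversal_le_one (H : Hypergraph') : htw (addUniversal H) ≤ 1 :=
  htw_le_one_of_forall_mem _ none fun _ => trivial

lemma Hypergraph'.incidenceGraph_adj_inl_inr (H : Hypergraph') (v : H.V) (e : H.E) :
    H.incidenceGraph.Adj (.inl v) (.inr e) ↔ H.mem v e := by
  simp [incidenceGraph, fromRel_adj]

/-- adding a universal hyperedge to any hypergraph yields a
hypergraph of hypertree width (at most) one; hence there is a family of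
hypergraphs of hypertree width one with unbounded incidence treewidth. -/
theorem universal_hyperedge_htw_one :
    (∀ H : Hypergraph', htw (addUniversal H) ≤ 1) ∧
      ∀ n : ℕ, ∃ H : Hypergraph',
        htw H ≤ 1 ∧ (n : ℕ∞) < treewidth H.incidenceGraph := by
  refine ⟨htw_addUniversal_le_one, fun n => ?_⟩
  let H : Hypergraph' := addUniversal ⟨Fin (n + 2), Fin (n + 2), fun _ _ => True⟩
  have htw_le : (n + 1 : ℕ) ≤ treewidth H.incidenceGraph := by
    have := le_treewidth_of_biclique (G := H.incidenceGraph) (A := fun v : Fin (n + 2) => .inl v)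
      (B := fun e => .inr (some e)) (fun _ _ h => Sum.inl_injective h)
      (fun _ _ h => Option.some_injective _ (Sum.inr_injective h))
      fun v e => (H.incidenceGraph_adj_inl_inr v (some e)).2 trivial
    rwa [ENat.card_eq_coe_fintype_card, Fintype.card_fin, ← ENat.natCast_one,
      ← ENat.natCast_sub] at this
  exact ⟨H, htw_addUniversal_le_one _, lt_of_lt_of_le (by exact_mod_cast n.lt_succ_self) htw_le⟩
end
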